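/- Let T be a tree with a maximum matching M and an M-alternating path v_i v_p v_q v_j of length three (edges v_i v_p and v_q v_j in M), such that the middle edge v_p v_q belongs to some other maximum matching of T. Then the group inverse graph T# contains the 4-cycle (v_i, v_p, v_q, v_j) and hence is not a tree. -/

import Mathlib

open SimpleGraph

/-- `X` is the group inverse of `A`. -/
def IsGroupInverse {n : Type*} [Fintype n] (A X : Matrix n n ℝ) : Prop :=
  A * X * A = A ∧ X * A * X = X ∧ A * X = X * A

/-- A matching of a graph: a set of pairwise non-incident edges. -/
def IsMatching {V : Type*} (G : SimpleGraph V) (M : Finset (Sym2 V)) : Prop :=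
  (↑M : Set (Sym2 V)) ⊆ G.edgeSet ∧
    ∀ e ∈ M, ∀ f ∈ M, e ≠ f → ∀ v : V, ¬(v ∈ e ∧ v ∈ f)

/-- A maximum matching: a matching of maximum cardinality. -/
def IsMaxMatching {V : Type*} (G : SimpleGraph V) (M : Finset (Sym2 V)) : Prop :=
  IsMatching G M ∧ ∀ N : Finset (Sym2 V), IsMatching G N → N.card ≤ M.card

/-- A nonempty list of edges alternately in and out of `M`,
beginning and ending with edges of `M`. -/
def IsAltEdgeList {V : Type*} (M : Set (Sym2 V)) : List (Sym2 V) → Prop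
  | [] => False
  | [e] => e ∈ M
  | e :: f :: rest => e ∈ M ∧ f ∉ M ∧ IsAltEdgeList M rest

/-- A pair of vertices is maximally matchable if they are joined by a path that is
alternating with respect to some maximum matching. -/
def MaxMatchable {V : Type*} (G : SimpleGraph V) (u v : V) : Prop :=
  ∃ (p : G.Walk u v) (M : Finset (Sym2 V)),
    p.IsPath ∧ IsMaxMatching G M ∧ IsAltEdgeList (↑M) p.edges

/-- `G` is a star: some center `c` is adjacent to exactly the other vertices,
and there are no other edges. -/
def IsStar {V : Type*} (G : SimpleGraph V) : Prop :=
  ∃ c : V, ∀ u v : V, G.Adj u v ↔ ((u = c ∧ v ≠ c) ∨ (v = c ∧ u ≠ c))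

/-- The class 𝕋: trees with at least one non-pendant vertex in which every
non-pendant vertex is adjacent to a pendant vertex. -/
def InClassT {V : Type*} [Fintype V] (T : SimpleGraph V) [DecidableRel T.Adj] : Prop :=
  T.IsTree ∧ (∃ v, T.degree v ≠ 1) ∧
    ∀ v, T.degree v ≠ 1 → ∃ u, T.Adj v u ∧ T.degree u = 1

/-- The number of pendant neighbours of `v`. -/
def pendantNbrs {V : Type*} [Fintype V] [DecidableEq V] (T : SimpleGraph V)
    [DecidableRel T.Adj] (v : V) : ℕ :=
  ((T.neighborFinset v).filter fun u => T.degree u = 1).card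

/-!
Each edge of the 4-cycle is maximally matchable: the three edges `vi vp`, `vp vq`, `vq vj` are
single-edge alternating paths for `M`, `M'`, `M` respectively, and the closing pair `vj vi` is joined
by the `M`-alternating path `vj vq vp vi`. A 4-cycle rules out acyclicity, so `T#` is not a tree.
-/

namespace SimpleGraph

variable {V : Type*} {G : SimpleGraph V}

theorem Walk.isPath_cons_cons_cons {a b c d : V} (hab : G.Adj a b) (hbc : G.Adj b c)
    (hcd : G.Adj c d) (hdist : [a, b, c, d].Nodup) :
    (cons hab (cons hbc (cons hcd nil))).IsPath :=
  Walk.IsPath.mk' hdist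

theorem not_isAcyclic_of_four_cycle {a b c d : V} (hdist : [a, b, c, d].Nodup)
    (hab : G.Adj a b) (hbc : G.Adj b c) (hcd : G.Adj c d) (hda : G.Adj d a) :
    ¬ G.IsAcyclic := by
  intro hG
  refine hG (Walk.cons hda (Walk.cons hab (Walk.cons hbc (Walk.cons hcd Walk.nil)))) ?_
  rw [Walk.cons_isCycle_iff]
  refine ⟨Walk.isPath_cons_cons_cons hab hbc hcd hdist, ?_⟩
  simp only [List.nodup_cons, List.mem_cons, List.not_mem_nil] at hdist
  simp only [Walk.edges_cons, Walk.edges_nil, List.mem_cons, Sym2.eq, Sym2.rel_iff',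
    Prod.mk.injEq, Prod.swap_prod_mk, List.not_mem_nil, or_false, not_or, not_and]
  tauto

end SimpleGraph

open SimpleGraph

section MaxMatchable

variable {V : Type*} {G : SimpleGraph V} {M : Finset (Sym2 V)} {u v : V}

theorem MaxMatchable.ne (h : MaxMatchable G u v) : u ≠ v := by
  rintro rfl
  obtain ⟨p, _, hp, -, halt⟩ := h
  simp [(Walk.isPath_iff_nil.1 hp).eq_nil, IsAltEdgeList] at halt

theorem MaxMatchable.fromRel_adj (h : MaxMatchable G u v) :
    (fromRel (MaxMatchable G)).Adj u v :=
  (SimpleGraph.fromRel_adj _ _ _).2 ⟨h.ne, Or.inl h⟩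

theorem maxMatchable_of_mem (hM : IsMaxMatching G M) (he : s(u, v) ∈ M) :
    MaxMatchable G u v := by
  have huv : G.Adj u v := hM.1.1 he
  exact ⟨.cons huv .nil, M, by simp [huv.ne], hM, he⟩

theorem maxMatchable_of_alternating_three {a b : V} (hM : IsMaxMatching G M)
    (hdist : [u, a, b, v].Nodup) (hua : s(u, a) ∈ M) (hab : G.Adj a b) (hab' : s(a, b) ∉ M)
    (hbv : s(b, v) ∈ M) : MaxMatchable G u v :=
  ⟨.cons (hM.1.1 hua) (.cons hab (.cons (hM.1.1 hbv) .nil)), M,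
    Walk.isPath_cons_cons_cons _ _ _ hdist, hM, hua, hab', hbv⟩

end MaxMatchable

theorem middle_edge_in_other_matching_not_tree {V : Type*}
    (T : SimpleGraph V)
    (M M' : Finset (Sym2 V)) (hM : IsMaxMatching T M) (hM' : IsMaxMatching T M')
    (vi vp vq vj : V) (hdist : [vi, vp, vq, vj].Pairwise (· ≠ ·))
    (h1 : s(vi, vp) ∈ M) (h2 : s(vq, vj) ∈ M)
    (h4 : s(vp, vq) ∉ M) (h5 : s(vp, vq) ∈ M') :
    (MaxMatchable T vi vp ∧ MaxMatchable T vp vq ∧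
      MaxMatchable T vq vj ∧ MaxMatchable T vj vi) ∧
    ¬ (SimpleGraph.fromRel (MaxMatchable T)).IsTree := by
  have hdist' : [vj, vq, vp, vi].Nodup := by simpa using List.nodup_reverse.2 hdist
  have m1 := maxMatchable_of_mem hM h1
  have m2 := maxMatchable_of_mem hM' h5
  have m3 := maxMatchable_of_mem hM h2
  have m4 : MaxMatchable T vj vi :=
    maxMatchable_of_alternating_three hM hdist' (Sym2.eq_swap ▸ h2) (hM'.1.1 h5).symm
      (Sym2.eq_swap ▸ h4) (Sym2.eq_swap ▸ h1)
  exact ⟨⟨m1, m2, m3, m4⟩, fun hT => not_isAcyclic_of_four_cycle hdist m1.fromRel_adj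
    m2.fromRel_adj m3.fromRel_adj m4.fromRel_adj hT.isAcyclic⟩
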